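/- arXiv:1307.4036 — 3 statements merged into one kernel-verified Lean document; each statement's English description precedes it below -/
import Mathlib

section
/- For all i, j ≥ 1, the extended weighted kneading determinant Δ_{ij}(z) = det(I₂ − z M_{ij}(z)) satisfies Δ_{ij}(z) = Δ(z)·(1 − C_j^{i-1} z^{i-j+1}) − C_1^{i-1} · Σ_{n≥0} a_{j+n-1} C_j^{j+n-1} z^{n+i+1}, where the monomial C_j^{i-1} z^{i-j+1} is interpreted as 0 when i < j−1 (its coefficient C_j^{i-1} then vanishes, so no negative powers of z occur). -/
/-- Addition of a natural number to a positive natural number,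
yielding a positive natural number. -/
def pnatAdd (j : ℕ+) (k : ℕ) : ℕ+ :=
  ⟨(j : ℕ) + k, Nat.lt_of_lt_of_le j.pos (Nat.le_add_right _ _)⟩

/-- The weighted kneading determinant `Δ(z) = 1 − Σ_{n≥0} a_n C_1^n z^{n+1}`
of the Leslie difference equation, where `C_1^n = ∏_{k=1}^n b_k`. -/
noncomputable def kneadingDet (a : ℕ → ℂ) (b : ℕ+ → ℂ) : PowerSeries ℂ :=
  1 - PowerSeries.X
        * PowerSeries.mk (fun n => a n * ∏ k ∈ Finset.range n, b (pnatAdd 1 k))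

/-- The extended weighted kneading matrix `M_{ij}(z)`: the `2 × 2` matrix over
`ℂ[[z]]` with rows `(Σ (R X^n e_1) z^n, Σ (R X^n e_j) z^n)` and
`(Σ (X^n e_1)_i z^n, Σ (X^n e_j)_i z^n)`. -/
noncomputable def kneadingMatrix
    (X : (ℕ+ →₀ ℂ) →ₗ[ℂ] (ℕ+ →₀ ℂ)) (R : (ℕ+ →₀ ℂ) →ₗ[ℂ] ℂ)
    (i j : ℕ+) : Matrix (Fin 2) (Fin 2) (PowerSeries ℂ) :=
  !![PowerSeries.mk (fun n => R ((X ^ n) (Finsupp.single (1 : ℕ+) 1))),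
     PowerSeries.mk (fun n => R ((X ^ n) (Finsupp.single j 1)));
     PowerSeries.mk (fun n => ((X ^ n) (Finsupp.single (1 : ℕ+) 1)) i),
     PowerSeries.mk (fun n => ((X ^ n) (Finsupp.single j 1)) i)]

/-- The extended weighted kneading determinant `Δ_{ij}(z) = det(I₂ − z M_{ij}(z))`. -/
noncomputable def extKneadingDet
    (X : (ℕ+ →₀ ℂ) →ₗ[ℂ] (ℕ+ →₀ ℂ)) (R : (ℕ+ →₀ ℂ) →ₗ[ℂ] ℂ)
    (i j : ℕ+) : PowerSeries ℂ :=
  Matrix.det (1 - (PowerSeries.X : PowerSeries ℂ) • kneadingMatrix X R i j)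

/-! `X` is a weighted shift, so `X ^ n e_j = C_j^{j+n-1} e_{j+n}`. Hence the first row of
`M_{ij}` consists of the series `Σ a_{j+n-1} C_j^{j+n-1} z^n` (for `j` and for `1`, the latter being
`(1 - Δ) / z`) and the second row of the monomials `C_1^{i-1} z^{i-1}` and `C_j^{i-1} z^{i-j}`
(zero if `i < j`). Expanding the `2 × 2` determinant then gives the formula. -/

open PowerSeries Finsupp Finset

theorem pnatAdd_zero (j : ℕ+) : pnatAdd j 0 = j := rfl

theorem pnatAdd_succ (j : ℕ+) (n : ℕ) : pnatAdd j n + 1 = pnatAdd j (n + 1) := rfl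

theorem pnatAdd_eq_iff {i j : ℕ+} {n : ℕ} : pnatAdd j n = i ↔ (j : ℕ) + n = i :=
  PNat.coe_inj.symm

theorem Matrix.det_one_sub_smul_fin_two {A : Type*} [CommRing A] (t : A)
    (M : Matrix (Fin 2) (Fin 2) A) :
    (1 - t • M).det = (1 - t * M 0 0) * (1 - t * M 1 1) - t ^ 2 * (M 0 1 * M 1 0) := by
  rw [Matrix.det_fin_two]
  simp only [Matrix.sub_apply, Matrix.smul_apply, Matrix.one_apply_eq, smul_eq_mul,
    Matrix.one_apply_ne (show (0 : Fin 2) ≠ 1 by decide),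
    Matrix.one_apply_ne (show (1 : Fin 2) ≠ 0 by decide)]
  ring

section WeightedShift

variable {K : Type*} [CommSemiring K] {b : ℕ+ → K} {X : (ℕ+ →₀ K) →ₗ[K] (ℕ+ →₀ K)}

theorem pow_apply_single_of_weightedShift
    (hX : ∀ j : ℕ+, X (single j 1) = b j • single (j + 1) 1) (j : ℕ+) (n : ℕ) :
    (X ^ n) (single j 1) = (∏ k ∈ range n, b (pnatAdd j k)) • single (pnatAdd j n) 1 := by
  induction n with
  | zero => simp [pnatAdd_zero]
  | succ n ih =>
    rw [pow_succ', Module.End.mul_apply, ih, map_smul, hX, pnatAdd_succ, smul_smul,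
      prod_range_succ]

theorem mk_apply_pow_apply_single_of_weightedShift
    (hX : ∀ j : ℕ+, X (single j 1) = b j • single (j + 1) 1)
    {a : ℕ → K} {R : (ℕ+ →₀ K) →ₗ[K] K} (hR : ∀ j : ℕ+, R (single j 1) = a ((j : ℕ) - 1))
    (j : ℕ+) :
    mk (fun n => R ((X ^ n) (single j 1)))
      = mk fun n => a ((j : ℕ) + n - 1) * ∏ k ∈ range n, b (pnatAdd j k) := by
  ext n
  rw [coeff_mk, coeff_mk, pow_apply_single_of_weightedShift hX, map_smul, hR, smul_eq_mul,
    mul_comm]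
  rfl

theorem mk_pow_apply_single_apply_of_weightedShift
    (hX : ∀ j : ℕ+, X (single j 1) = b j • single (j + 1) 1) (i j : ℕ+) :
    mk (fun n => (X ^ n) (single j 1) i)
      = if (j : ℕ) ≤ i then monomial ((i : ℕ) - j) (∏ k ∈ range ((i : ℕ) - j), b (pnatAdd j k))
        else 0 := by
  ext n
  simp only [coeff_mk, pow_apply_single_of_weightedShift hX, Finsupp.smul_apply, single_apply,
    pnatAdd_eq_iff, smul_eq_mul]
  by_cases hji : (j : ℕ) ≤ i
  · rw [if_pos hji, coeff_monomial]
    by_cases hn : (j : ℕ) + n = i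
    · rw [if_pos hn, if_pos (by omega), show n = (i : ℕ) - j by omega, mul_one]
    · rw [if_neg hn, if_neg (by omega), mul_zero]
  · rw [if_neg hji, if_neg (by omega), map_zero, mul_zero]

end WeightedShift

/-- For all `i, j ≥ 1`,
`Δ_{ij}(z) = Δ(z)·(1 − C_j^{i-1} z^{i-j+1}) − C_1^{i-1} · Σ_{n≥0} a_{j+n-1} C_j^{j+n-1} z^{n+i+1}`,
where the monomial `C_j^{i-1} z^{i-j+1}` is interpreted as `0` when `i < j`
(its coefficient `C_j^{i-1}` vanishes there, so no negative powers of `z` occur). -/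
theorem extended_kneading_determinant_formula
    (a : ℕ → ℂ) (b : ℕ+ → ℂ)
    (X : (ℕ+ →₀ ℂ) →ₗ[ℂ] (ℕ+ →₀ ℂ))
    (hX : ∀ j : ℕ+, X (Finsupp.single j 1) = b j • Finsupp.single (j + 1) 1)
    (R : (ℕ+ →₀ ℂ) →ₗ[ℂ] ℂ)
    (hR : ∀ j : ℕ+, R (Finsupp.single j 1) = a ((j : ℕ) - 1))
    (i j : ℕ+) :
    extKneadingDet X R i j
      = kneadingDet a b
          * (1 - (if (j : ℕ) ≤ (i : ℕ) then
              (PowerSeries.monomial ((i : ℕ) - (j : ℕ) + 1))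
                (∏ k ∈ Finset.range ((i : ℕ) - (j : ℕ)), b (pnatAdd j k))
            else 0))
        - PowerSeries.C (∏ k ∈ Finset.range ((i : ℕ) - 1), b (pnatAdd 1 k))
            * ((PowerSeries.X : PowerSeries ℂ) ^ ((i : ℕ) + 1)
                * PowerSeries.mk
                    (fun n => a ((j : ℕ) + n - 1)
                      * ∏ k ∈ Finset.range n, b (pnatAdd j k))) := by
  have hX_pow : (PowerSeries.X ^ ((i : ℕ) + 1) : ℂ⟦X⟧)
      = PowerSeries.X ^ 2 * PowerSeries.X ^ ((i : ℕ) - 1) := by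
    rw [← pow_add, show 2 + ((i : ℕ) - 1) = i + 1 by have := i.pos; omega]
  unfold extKneadingDet
  rw [Matrix.det_one_sub_smul_fin_two]
  simp only [kneadingMatrix, Matrix.of_apply, Matrix.cons_val', Matrix.cons_val_zero,
    Matrix.cons_val_one, Matrix.empty_val', Matrix.cons_val_fin_one,
    mk_apply_pow_apply_single_of_weightedShift hX hR,
    mk_pow_apply_single_apply_of_weightedShift hX,
    PNat.one_coe, Nat.add_sub_cancel_left, show 1 ≤ (i : ℕ) from i.pos, if_true]
  rw [kneadingDet, hX_pow]
  simp only [monomial_eq_C_mul_X_pow]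
  split_ifs <;> ring
end

section
/- The generating function of the (1,1) entries of the powers of the infinite Leslie matrix L is the inverse of the weighted kneading determinant: Σ_{n≥0} (L^n)_{11} z^n = Δ(z)^{-1} in ℂ[[z]]; equivalently, Δ(z) · Σ_{n≥0} (L^n)_{11} z^n = 1. -/
/-!
Write `f n = (Lⁿ)₁₁` and `C m = C_1^m`. Starting from `e₁`, the matrix `L` either shifts mass
one step down the diagonal (weight `b`) or sends it back to `e₁` (weight `a`), so
`Lⁿ e₁ = Σ_{m ≤ n} f (n - m) C m e_{1+m}`. Reading off the `e₁`-coordinate of `L (Lⁿ e₁)` gives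
the renewal equation `f (n+1) = Σ_{m ≤ n} a m C m f (n - m)`, which says exactly that
`(1 - z Σ a m C m z^m) · Σ f n z^n = 1`.
-/

open Finset PowerSeries

theorem PowerSeries.one_sub_X_mul_mul_mk_eq_one {R : Type*} [CommRing R] {f g : ℕ → R}
    (h0 : f 0 = 1) (hsucc : ∀ n, f (n + 1) = ∑ p ∈ antidiagonal n, g p.1 * f p.2) :
    (1 - X * mk g) * mk f = 1 := by
  have hfix : mk f = 1 + X * (mk g * mk f) := by
    ext (_ | n)
    · simp [h0]
    · rw [map_add, coeff_succ_X_mul, coeff_mul]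
      simp [hsucc]
  linear_combination hfix

lemma pnatAdd_one_zero : pnatAdd 1 0 = 1 := rfl

lemma pnatAdd_one_add_one (m : ℕ) : pnatAdd 1 m + 1 = pnatAdd 1 (m + 1) :=
  PNat.eq rfl

lemma pnatAdd_one_sub_one (m : ℕ) : ((pnatAdd 1 m : ℕ+) : ℕ) - 1 = m :=
  Nat.add_sub_cancel_left ..

lemma pnatAdd_one_succ_ne_one (m : ℕ) : pnatAdd 1 (m + 1) ≠ 1 := fun h => by
  simpa [pnatAdd] using congrArg PNat.val h

section Leslie

variable {R : Type*} [CommSemiring R]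

/-- The weight `C_1^m = b₁ ⋯ b_m`. -/
def leslieWeight (b : ℕ+ → R) (m : ℕ) : R := ∏ k ∈ range m, b (pnatAdd 1 k)

lemma leslieWeight_zero (b : ℕ+ → R) : leslieWeight b 0 = 1 := prod_range_zero _

lemma leslieWeight_succ (b : ℕ+ → R) (m : ℕ) :
    leslieWeight b (m + 1) = leslieWeight b m * b (pnatAdd 1 m) :=
  prod_range_succ _ _

def IsLeslieMap (a : ℕ → R) (b : ℕ+ → R) (L : (ℕ+ →₀ R) →ₗ[R] (ℕ+ →₀ R)) : Prop :=
  ∀ j : ℕ+, L (Finsupp.single j 1)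
    = a ((j : ℕ) - 1) • Finsupp.single (1 : ℕ+) 1 + b j • Finsupp.single (j + 1) 1

namespace IsLeslieMap

variable {a : ℕ → R} {b : ℕ+ → R} {L : (ℕ+ →₀ R) →ₗ[R] (ℕ+ →₀ R)}

lemma apply_sum (hL : IsLeslieMap a b L) (x : ℕ → R) (N : ℕ) :
    L (∑ m ∈ range N, x m • Finsupp.single (pnatAdd 1 m) 1)
      = (∑ m ∈ range N, x m * a m) • Finsupp.single 1 1
        + ∑ m ∈ range N, (x m * b (pnatAdd 1 m)) • Finsupp.single (pnatAdd 1 (m + 1)) 1 := by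
  simp only [map_sum, map_smul, hL _, pnatAdd_one_sub_one, pnatAdd_one_add_one, smul_add,
    smul_smul, sum_add_distrib, sum_smul]

lemma apply_sum_apply_one (hL : IsLeslieMap a b L) (x : ℕ → R) (N : ℕ) :
    L (∑ m ∈ range N, x m • Finsupp.single (pnatAdd 1 m) 1) 1 = ∑ m ∈ range N, x m * a m := by
  rw [hL.apply_sum, Finsupp.add_apply, Finsupp.finsetSum_apply]
  simp [pnatAdd_one_succ_ne_one]

lemma pow_apply_single_one (hL : IsLeslieMap a b L) (n : ℕ) :
    (L ^ n) (Finsupp.single 1 1)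
      = ∑ m ∈ range (n + 1),
          ((L ^ (n - m)) (Finsupp.single 1 1) 1 * leslieWeight b m)
            • Finsupp.single (pnatAdd 1 m) 1 := by
  induction n with
  | zero => simp [leslieWeight_zero, pnatAdd_one_zero]
  | succ n ih =>
    have hpow : (L ^ (n + 1)) (Finsupp.single 1 1) = L ((L ^ n) (Finsupp.single 1 1)) := by
      rw [pow_succ', Module.End.mul_apply]
    have hone := congrArg (· 1) hpow
    simp only [ih, hL.apply_sum_apply_one] at hone
    rw [sum_range_succ', hpow, ih, hL.apply_sum, add_comm, ← hone]
    simp only [Nat.add_sub_add_right, leslieWeight_succ, mul_assoc, Nat.sub_zero,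
      leslieWeight_zero, mul_one, pnatAdd_one_zero]

lemma pow_succ_apply_single_one_one (hL : IsLeslieMap a b L) (n : ℕ) :
    (L ^ (n + 1)) (Finsupp.single 1 1) 1
      = ∑ p ∈ antidiagonal n, a p.1 * leslieWeight b p.1 * (L ^ p.2) (Finsupp.single 1 1) 1 := by
  rw [Nat.sum_antidiagonal_eq_sum_range_succ (fun i j => a i * leslieWeight b i * (L ^ j) _ 1),
    pow_succ', Module.End.mul_apply, hL.pow_apply_single_one, hL.apply_sum_apply_one]
  exact sum_congr rfl fun m _ => by ring

end IsLeslieMap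

end Leslie

/-- The generating function of the `(1,1)` entries of the powers of
the infinite Leslie matrix `L` (realized as the endomorphism of `ℕ+ →₀ ℂ` with
`L e_j = a_{j-1} e_1 + b_j e_{j+1}`) is the inverse of the weighted kneading
determinant: `Σ_{n≥0} (L^n)_{11} z^n = Δ(z)⁻¹`; equivalently,
`Δ(z) · Σ_{n≥0} (L^n)_{11} z^n = 1`. -/
theorem leslie_generating_function_one_one
    (a : ℕ → ℂ) (b : ℕ+ → ℂ)
    (L : (ℕ+ →₀ ℂ) →ₗ[ℂ] (ℕ+ →₀ ℂ))
    (hL : ∀ j : ℕ+, L (Finsupp.single j 1)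
        = a ((j : ℕ) - 1) • Finsupp.single (1 : ℕ+) 1
          + b j • Finsupp.single (j + 1) 1) :
    PowerSeries.mk (fun n => ((L ^ n) (Finsupp.single (1 : ℕ+) 1)) (1 : ℕ+))
        = (kneadingDet a b)⁻¹
    ∧ kneadingDet a b
        * PowerSeries.mk (fun n => ((L ^ n) (Finsupp.single (1 : ℕ+) 1)) (1 : ℕ+))
        = 1 := by
  have hL' : IsLeslieMap a b L := hL
  have hmul : kneadingDet a b * mk (fun n => (L ^ n) (Finsupp.single 1 1) 1) = 1 :=
    one_sub_X_mul_mul_mk_eq_one (g := fun n => a n * leslieWeight b n) (by simp)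
      hL'.pow_succ_apply_single_one_one
  refine ⟨(eq_inv_iff_mul_eq_one (by simp [kneadingDet])).2 ?_, hmul⟩
  rwa [mul_comm]
end

section
/- Let a, b, χ ∈ ℂ and let L be the infinite Leslie matrix with birth rates a_l = a χ^l and constant transition rates b_j = b. Then for all i, j ≥ 1, Σ_{n≥0} (L^n)_{ij} z^n = h(i−j) · b^{i-j} z^{i-j} + a b^{i-1} χ^{j-1} · Σ_{n≥i} (a + bχ)^{n-i} z^n in ℂ[[z]], where h(k) = 1 if k ≥ 0 and h(k) = 0 otherwise (so the first term is absent when i < j). -/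
/-! The birth functional `f x = ∑ₖ a χ^(k-1) xₖ` satisfies `f (L x) = (a + b χ) f x`, so the
newborns produced at step `m + 1` by `L^m e_j` number `a χ^(j-1) (a + b χ)^m`. An entry of
`L^n e_j` in class `i` is therefore either the survivor `b^n` of the original individual
(when `i = j + n`) or a newborn of step `n - i + 1` that has survived `i - 1` transitions. -/

section GeometricLeslie

variable {R : Type*} [CommSemiring R]

def geometricLeslieEntry (a b χ : R) (n i j : ℕ) : R :=
  (if j + n = i then b ^ n else 0)
    + a * b ^ (i - 1) * χ ^ (j - 1) * (if i ≤ n then (a + b * χ) ^ (n - i) else 0)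

theorem geometricLeslieEntry_zero (a b χ : R) {i : ℕ} (hi : 0 < i) (j : ℕ) :
    geometricLeslieEntry a b χ 0 i j = if j = i then 1 else 0 := by
  simp [geometricLeslieEntry, Nat.ne_of_gt hi]

theorem geometricLeslieEntry_succ (a b χ : R) (n i : ℕ) {j : ℕ} (hj : 0 < j) :
    geometricLeslieEntry a b χ (n + 1) i j
      = a * χ ^ (j - 1) * geometricLeslieEntry a b χ n i 1
        + b * geometricLeslieEntry a b χ n i (j + 1) := by
  obtain ⟨j, rfl⟩ : ∃ j', j = j' + 1 := ⟨j - 1, by omega⟩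
  have hshift : j + 1 + (n + 1) = i ↔ j + 1 + 1 + n = i := by omega
  simp only [geometricLeslieEntry, hshift, Nat.add_sub_cancel]
  rcases lt_trichotomy i (n + 1) with hlt | rfl | hgt
  · obtain ⟨k, rfl⟩ : ∃ k, n = i + k := ⟨n - i, by omega⟩
    simp only [show ¬ 1 + (i + k) = i by omega, show ¬ j + 1 + 1 + (i + k) = i by omega,
      show i ≤ i + k + 1 by omega, show i ≤ i + k by omega, show i + k + 1 - i = k + 1 by omega,
      Nat.add_sub_cancel_left, ↓reduceIte, zero_add]
    ring
  · simp only [show ¬ j + 1 + 1 + n = n + 1 by omega, show ¬ n + 1 ≤ n by omega,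
      show 1 + n = n + 1 by omega, Nat.add_sub_cancel, le_refl, Nat.sub_self, ↓reduceIte, pow_zero]
    ring
  · simp only [show ¬ 1 + n = i by omega, show ¬ i ≤ n + 1 by omega, show ¬ i ≤ n by omega,
      ↓reduceIte, mul_zero, add_zero]
    split_ifs <;> ring

theorem PowerSeries.coeff_ite_le_monomial_sub_pow (b : R) (n i j : ℕ) :
    coeff n (if j ≤ i then monomial (i - j) (b ^ (i - j)) else 0)
      = if j + n = i then b ^ n else 0 := by
  rw [apply_ite (coeff n), coeff_monomial, map_zero]
  by_cases h : j + n = i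
  · subst h
    simp
  · simp only [h, if_false]
    split_ifs <;> first | rfl | omega

variable {a b χ : R} {L : (ℕ+ →₀ R) →ₗ[R] (ℕ+ →₀ R)}

theorem pow_succ_apply_single_of_geometricLeslie
    (hL : ∀ j : ℕ+, L (Finsupp.single j 1)
      = (a * χ ^ ((j : ℕ) - 1)) • Finsupp.single 1 1 + b • Finsupp.single (j + 1) 1)
    (n : ℕ) (j : ℕ+) :
    (L ^ (n + 1)) (Finsupp.single j 1)
      = (a * χ ^ ((j : ℕ) - 1)) • (L ^ n) (Finsupp.single 1 1)
        + b • (L ^ n) (Finsupp.single (j + 1) 1) := by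
  rw [pow_succ, Module.End.mul_apply, hL j, map_add, map_smul, map_smul]

theorem pow_apply_single_apply_eq_geometricLeslieEntry
    (hL : ∀ j : ℕ+, L (Finsupp.single j 1)
      = (a * χ ^ ((j : ℕ) - 1)) • Finsupp.single 1 1 + b • Finsupp.single (j + 1) 1)
    (n : ℕ) (i j : ℕ+) :
    (L ^ n) (Finsupp.single j 1) i = geometricLeslieEntry a b χ n i j := by
  induction n generalizing j with
  | zero =>
    simp only [geometricLeslieEntry_zero a b χ i.pos, pow_zero, Module.End.one_apply,
      Finsupp.single_apply, PNat.coe_inj]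
  | succ n ih =>
    rw [pow_succ_apply_single_of_geometricLeslie hL, Finsupp.add_apply, Finsupp.smul_apply,
      Finsupp.smul_apply, ih, ih, smul_eq_mul, smul_eq_mul, PNat.add_coe, PNat.one_coe,
      geometricLeslieEntry_succ a b χ n i j.pos]

end GeometricLeslie

/-- For the geometric-fertility Leslie model, i.e. the infinite
Leslie matrix `L` with birth rates `a_l = a χ^l` and constant transition rates
`b_j = b`, realized as the endomorphism of `ℕ+ →₀ ℂ` with
`L e_j = a χ^{j-1} e_1 + b e_{j+1}`, one has for all `i, j ≥ 1`:
`Σ_{n≥0} (L^n)_{ij} z^n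
   = h(i−j) b^{i-j} z^{i-j} + a b^{i-1} χ^{j-1} Σ_{n≥i} (a+bχ)^{n-i} z^n`,
where `h` is the discrete Heaviside function (the first term is absent when `i < j`). -/
theorem geometric_leslie_generating_function
    (a b χ : ℂ)
    (L : (ℕ+ →₀ ℂ) →ₗ[ℂ] (ℕ+ →₀ ℂ))
    (hL : ∀ j : ℕ+, L (Finsupp.single j 1)
        = (a * χ ^ ((j : ℕ) - 1)) • Finsupp.single (1 : ℕ+) 1
          + b • Finsupp.single (j + 1) 1)
    (i j : ℕ+) :
    PowerSeries.mk (fun n => ((L ^ n) (Finsupp.single j 1)) i)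
      = (if (j : ℕ) ≤ (i : ℕ) then
          (PowerSeries.monomial ((i : ℕ) - (j : ℕ))) (b ^ ((i : ℕ) - (j : ℕ)))
        else 0)
        + PowerSeries.C (a * b ^ ((i : ℕ) - 1) * χ ^ ((j : ℕ) - 1))
            * PowerSeries.mk
                (fun n => if (i : ℕ) ≤ n then (a + b * χ) ^ (n - (i : ℕ)) else 0) := by
  ext n
  rw [PowerSeries.coeff_mk, pow_apply_single_apply_eq_geometricLeslieEntry hL, map_add,
    PowerSeries.coeff_C_mul, PowerSeries.coeff_mk, PowerSeries.coeff_ite_le_monomial_sub_pow]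
  rfl
end
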